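/- Let G = (A, B, E) be a bipartite graph, let S* be an optimal semi-matching of G with maximal degree d*, and let d ≥ d* be an integer. Let S_1 ⊆ E be any maximal incomplete d-bounded semi-matching of G (no edge of E can be added keeping it an incomplete d-bounded semi-matching). Then |S_1| ≥ |A| · d/(d + d*). -/

import Mathlib

open Finset

variable {α β : Type*} [Fintype α] [Fintype β] [DecidableEq α] [DecidableEq β]

/-- Degree of a vertex `b ∈ B` with respect to an edge set `S`. -/
def degB (S : Finset (α × β)) (b : β) : ℕ := (S.filter fun e => e.2 = b).card

/-- Degree of a vertex `a ∈ A` with respect to an edge set `S`. -/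
def degA (S : Finset (α × β)) (a : α) : ℕ := (S.filter fun e => e.1 = a).card

/-- Maximal degree of a vertex with respect to an edge set `S`. -/
def maxDeg (S : Finset (α × β)) : ℕ :=
  max (Finset.univ.sup (degA S)) (Finset.univ.sup (degB S))

/-- `S` is a semi-matching of `A'` into `B` using edges of `E`. -/
def IsSemi (A' : Finset α) (E S : Finset (α × β)) : Prop :=
  S ⊆ E ∧ (∀ e ∈ S, e.1 ∈ A') ∧ ∀ a ∈ A', degA S a = 1

/-- An optimal semi-matching of `A'` into `B` using edges of `E`:
a semi-matching minimizing the maximal degree. -/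
def IsOptSemi (A' : Finset α) (E S : Finset (α × β)) : Prop :=
  IsSemi A' E S ∧ ∀ T, IsSemi A' E T → maxDeg S ≤ maxDeg T

/-- Neighborhood of a set `X ⊆ A` of vertices with respect to an edge set `E`. -/
def nbr (E : Finset (α × β)) (X : Finset α) : Finset β :=
  Finset.univ.filter fun b => ∃ a ∈ X, (a, b) ∈ E


/-- An incomplete `d`-bounded semi-matching of `G`: every `A`-degree is at most `1` and
every `B`-degree is at most `d`. -/
def IsIncompleteSemi (d : ℕ) (E S : Finset (α × β)) : Prop :=
  S ⊆ E ∧ (∀ a : α, degA S a ≤ 1) ∧ ∀ b : β, degB S b ≤ d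

/-!
Let `U` be the `A`-vertices left unmatched by `S₁` and `F` the `B`-vertices that `S₁` saturates
(degree `d`). By maximality of `S₁`, the `S*`-edge at any `a ∈ U` must end in `F`, so
`|U| ≤ d* |F|`; on the other hand `d |F| ≤ |S₁|` and `|U| = |A| - |S₁|`. Together,
`|A| d ≤ |S₁| (d + d*)`.
-/

section Degrees

variable (S : Finset (α × β))

omit [Fintype β] [DecidableEq β] in
lemma sum_degA : ∑ a, degA S a = #S :=
  (card_eq_sum_card_fiberwise fun e _ => mem_univ e.1).symm

omit [Fintype α] [DecidableEq α] in
lemma sum_degB : ∑ b, degB S b = #S :=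
  (card_eq_sum_card_fiberwise fun e _ => mem_univ e.2).symm

lemma degB_le_maxDeg (b : β) : degB S b ≤ maxDeg S :=
  le_max_of_le_right (le_sup (mem_univ b))

omit [Fintype α] [Fintype β] [DecidableEq β] in
lemma exists_mem_of_degA_ne_zero {a : α} (h : degA S a ≠ 0) : ∃ b, (a, b) ∈ S := by
  obtain ⟨e, he⟩ := card_ne_zero.mp h
  obtain ⟨heS, rfl⟩ := mem_filter.mp he
  exact ⟨e.2, heS⟩

omit [Fintype α] [Fintype β] [DecidableEq β] in
lemma notMem_of_degA_eq_zero {e : α × β} (h : degA S e.1 = 0) : e ∉ S := fun he =>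
  (card_pos.mpr ⟨e, mem_filter.mpr ⟨he, rfl⟩⟩ : 0 < degA S e.1).ne' h

omit [Fintype α] [Fintype β] in
lemma degA_insert_le (e : α × β) (a : α) : degA (insert e S) a ≤ degA S a + 1 := by
  unfold degA
  rw [filter_insert]
  split_ifs
  · exact card_insert_le _ _
  · exact Nat.le_succ _

omit [Fintype α] [Fintype β] in
lemma degA_insert_of_ne {e : α × β} {a : α} (h : e.1 ≠ a) : degA (insert e S) a = degA S a := by
  simp only [degA, filter_insert, if_neg h]

omit [Fintype α] [Fintype β] in
lemma degB_insert_le (e : α × β) (b : β) : degB (insert e S) b ≤ degB S b + 1 := by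
  unfold degB
  rw [filter_insert]
  split_ifs
  · exact card_insert_le _ _
  · exact Nat.le_succ _

omit [Fintype α] [Fintype β] in
lemma degB_insert_of_ne {e : α × β} {b : β} (h : e.2 ≠ b) : degB (insert e S) b = degB S b := by
  simp only [degB, filter_insert, if_neg h]

omit [Fintype β] [DecidableEq β] in
lemma card_filter_degA_ne_zero (h : ∀ a, degA S a ≤ 1) : #{a | degA S a ≠ 0} = #S := by
  rw [← sum_degA, card_filter]
  refine sum_congr rfl fun a _ => ?_
  have := h a
  split_ifs <;> omega

omit [Fintype α] [DecidableEq α] in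
lemma card_filter_degB_eq_mul_le (d : ℕ) : #{b | degB S b = d} * d ≤ #S := by
  calc #{b | degB S b = d} * d = ∑ b ∈ {b | degB S b = d}, degB S b := by
        rw [sum_congr rfl fun b hb => (mem_filter.mp hb).2, sum_const, smul_eq_mul]
    _ ≤ ∑ b, degB S b := sum_le_sum_of_subset (subset_univ _)
    _ = #S := sum_degB S

lemma card_filter_snd_mem_le (F : Finset β) :
    #(S.filter fun e => e.2 ∈ F) ≤ maxDeg S * #F := by
  refine (card_le_mul_card_image (f := Prod.snd) _ _ fun b _ => ?_).trans
    (Nat.mul_le_mul_left _ (card_le_card fun b hb => ?_))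
  · exact (card_le_card (filter_subset_filter _ (filter_subset _ _))).trans (degB_le_maxDeg S b)
  · obtain ⟨e, he, rfl⟩ := mem_image.mp hb
    exact (mem_filter.mp he).2

lemma card_le_maxDeg_mul_card {T : Finset (α × β)} {X : Finset α} {F : Finset β}
    (h : ∀ a ∈ X, ∃ b ∈ F, (a, b) ∈ T) : #X ≤ maxDeg T * #F := by
  refine le_trans (card_le_card fun a ha => ?_) ((card_image_le (f := Prod.fst)).trans
    (card_filter_snd_mem_le T F))
  obtain ⟨b, hbF, hab⟩ := h a ha
  exact mem_image.mpr ⟨(a, b), mem_filter.mpr ⟨hab, hbF⟩, rfl⟩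

end Degrees

section Maximal

variable {d : ℕ} {E S : Finset (α × β)}

omit [Fintype α] [Fintype β] in
lemma IsIncompleteSemi.insert (hS : IsIncompleteSemi d E S) {e : α × β} (he : e ∈ E)
    (hA : degA S e.1 = 0) (hB : degB S e.2 < d) : IsIncompleteSemi d E (insert e S) := by
  obtain ⟨hSE, hSA, hSB⟩ := hS
  refine ⟨insert_subset he hSE, fun a => ?_, fun b => ?_⟩
  · by_cases hea : e.1 = a
    · subst hea
      have := degA_insert_le S e e.1
      omega
    · exact (degA_insert_of_ne S hea).trans_le (hSA a)
  · by_cases heb : e.2 = b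
    · subst heb
      have := degB_insert_le S e e.2
      omega
    · exact (degB_insert_of_ne S heb).trans_le (hSB b)

omit [Fintype α] [Fintype β] in
lemma degB_eq_of_maximal (hS : IsIncompleteSemi d E S)
    (hmax : ∀ e ∈ E, e ∉ S → ¬ IsIncompleteSemi d E (insert e S))
    {e : α × β} (he : e ∈ E) (hA : degA S e.1 = 0) : degB S e.2 = d := by
  by_contra hne
  exact hmax e he (notMem_of_degA_eq_zero S hA)
    (hS.insert he hA (lt_of_le_of_ne (hS.2.2 e.2) hne))

end Maximal

theorem maximal_incomplete_semi_size_general (E Sstar S1 : Finset (α × β)) (d : ℕ)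
    (hSstar : IsOptSemi Finset.univ E Sstar)
    (h1 : IsIncompleteSemi d E S1)
    (hmax : ∀ e ∈ E, e ∉ S1 → ¬ IsIncompleteSemi d E (insert e S1)) :
    (Fintype.card α : ℝ) * d / (d + maxDeg Sstar) ≤ (S1.card : ℝ) := by
  obtain ⟨⟨hSE, -, hSdeg⟩, -⟩ := hSstar
  set U : Finset α := {a | degA S1 a = 0}
  set F : Finset β := {b | degB S1 b = d}
  have hU : #U + #S1 = Fintype.card α := by
    rw [← card_filter_degA_ne_zero S1 h1.2.1, card_filter_add_card_filter_not, card_univ]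
  have hUF : #U ≤ maxDeg Sstar * #F := card_le_maxDeg_mul_card fun a ha => by
    obtain ⟨b, hab⟩ := exists_mem_of_degA_ne_zero Sstar (by rw [hSdeg a (mem_univ a)]; exact one_ne_zero)
    exact ⟨b, mem_filter.mpr ⟨mem_univ b,
      degB_eq_of_maximal h1 hmax (hSE hab) (mem_filter.mp ha).2⟩, hab⟩
  have hF : #F * d ≤ #S1 := card_filter_degB_eq_mul_le S1 d
  have hnat : Fintype.card α * d ≤ #S1 * (d + maxDeg Sstar) := by
    calc Fintype.card α * d = #U * d + #S1 * d := by rw [← hU, add_mul]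
      _ ≤ maxDeg Sstar * (#F * d) + #S1 * d := by rw [← mul_assoc]; gcongr
      _ ≤ maxDeg Sstar * #S1 + #S1 * d := by gcongr
      _ = #S1 * (d + maxDeg Sstar) := by ring
  rcases Nat.eq_zero_or_pos (d + maxDeg Sstar) with h0 | hpos
  · simp [← Nat.cast_add, h0]
  · rw [div_le_iff₀ (by exact_mod_cast hpos)]
    exact_mod_cast hnat

/-- Any maximal incomplete `d`-bounded semi-matching `S₁` of `G`, with `d ≥ d*` for `d*`
the optimal semi-matching degree, satisfies `|S₁| ≥ |A| · d/(d + d*)`. -/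
theorem maximal_incomplete_semi_size (E Sstar S1 : Finset (α × β)) (d : ℕ)
    (hSstar : IsOptSemi Finset.univ E Sstar) (hd : maxDeg Sstar ≤ d)
    (h1 : IsIncompleteSemi d E S1)
    (hmax : ∀ e ∈ E, e ∉ S1 → ¬ IsIncompleteSemi d E (insert e S1)) :
    (Fintype.card α : ℝ) * d / (d + maxDeg Sstar) ≤ (S1.card : ℝ) :=
  maximal_incomplete_semi_size_general E Sstar S1 d hSstar h1 hmax
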